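/- Let G1 and G2 be disjoint 2-edge-connected multigraphs. Then the treewidth of their vertex-identification equals max{tw(G1), tw(G2)}, and the treewidth of both their edge-identification and their vertex-edge-identification equals max{2, tw(G1), tw(G2)}. -/

import Mathlib

open scoped Classical

/-- A finite multigraph without loops: a vertex type, an edge type, and an
incidence map assigning to each edge an unordered pair of distinct vertices. -/
structure MGraph where
  V : Type
  E : Type
  finV : Finite V
  finE : Finite E
  ends : E → Sym2 V
  noLoop : ∀ e, ¬ (ends e).IsDiag

namespace MGraph

variable (G : MGraph)

/-- Degree of a vertex counting only edges in the edge set `F`. -/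
noncomputable def degOn (F : Set G.E) (v : G.V) : ℕ := {e | e ∈ F ∧ v ∈ G.ends e}.ncard

/-- Degree of a vertex. -/
noncomputable def deg (v : G.V) : ℕ := G.degOn Set.univ v

/-- Adjacency using only edges from `F`. -/
def AdjOn (F : Set G.E) (a b : G.V) : Prop := ∃ e ∈ F, G.ends e = s(a, b)

/-- Reachability using only edges from `F`. -/
def ReachOn (F : Set G.E) : G.V → G.V → Prop := Relation.ReflTransGen (G.AdjOn F)

/-- Connectivity of a multigraph. -/
def Connected : Prop := Nonempty G.V ∧ ∀ a b : G.V, G.ReachOn Set.univ a b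

/-- A set of edges forms a cycle: it is nonempty, every vertex has degree 0 or 2
in it, and any two of its endpoints are joined by a path inside it. -/
def IsCycle (C : Set G.E) : Prop :=
  C.Nonempty ∧ (∀ v, G.degOn C v = 0 ∨ G.degOn C v = 2) ∧
    ∀ e ∈ C, ∀ f ∈ C, ∀ a b : G.V, a ∈ G.ends e → b ∈ G.ends f → G.ReachOn C a b

/-- A cycle decomposition of the edge set `F`: a set of cycles inside `F` such
that every edge of `F` lies in exactly one of them. -/
def IsCycleDecompOn (F : Set G.E) (D : Set (Set G.E)) : Prop :=
  (∀ C ∈ D, G.IsCycle C ∧ C ⊆ F) ∧ ∀ e ∈ F, ∃! C, C ∈ D ∧ e ∈ C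

/-- A cycle decomposition of the graph. -/
def IsCycleDecomp (D : Set (Set G.E)) : Prop := G.IsCycleDecompOn Set.univ D

/-- Minimum number of cycles in a cycle decomposition of `F`. -/
noncomputable def cOn (F : Set G.E) : ℕ :=
  sInf {n | ∃ D, G.IsCycleDecompOn F D ∧ D.ncard = n}

/-- Maximum number of cycles in a cycle decomposition of `F`. -/
noncomputable def nuOn (F : Set G.E) : ℕ :=
  sSup {n | ∃ D, G.IsCycleDecompOn F D ∧ D.ncard = n}

/-- Minimum cycle number. -/
noncomputable def c : ℕ := G.cOn Set.univ

/-- Maximum cycle number. -/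
noncomputable def nu : ℕ := G.nuOn Set.univ

/-- A multigraph is Eulerian if it admits a closed walk traversing every edge
exactly once. -/
def IsEulerian : Prop :=
  ∃ (vs : List G.V) (es : List G.E),
    vs.length = es.length + 1 ∧
    (∀ (i : ℕ) (e : G.E) (a b : G.V), es[i]? = some e → vs[i]? = some a →
      vs[i + 1]? = some b → G.ends e = s(a, b)) ∧
    vs.head? = vs.getLast? ∧ es.Nodup ∧ ∀ e : G.E, e ∈ es

/-- A cut-edge (bridge): its endpoints are disconnected after its removal. -/
def IsBridge (e : G.E) : Prop :=
  ∃ a b, G.ends e = s(a, b) ∧ ¬ G.ReachOn {e}ᶜ a b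

/-- 2-edge-connectivity: connected and without cut-edges. -/
def TwoEdgeConnected : Prop := G.Connected ∧ ∀ e, ¬ G.IsBridge e

/-- Reachability avoiding a vertex. -/
def ReachAvoid (v : G.V) (a b : G.V) : Prop :=
  Relation.ReflTransGen (fun x y => x ≠ v ∧ y ≠ v ∧ G.AdjOn Set.univ x y) a b

/-- A cut-vertex: two vertices in the same component get separated by its removal. -/
def IsCutVertex (v : G.V) : Prop :=
  ∃ a b, a ≠ v ∧ b ≠ v ∧ G.ReachOn Set.univ a b ∧ ¬ G.ReachAvoid v a b

/-- Biconnected: connected, at least two vertices, and without cut-vertices. -/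
def Biconnected : Prop :=
  G.Connected ∧ 2 ≤ Nat.card G.V ∧ ∀ v, ¬ G.IsCutVertex v

/-- The vertices covered by a set of edges. -/
def VertexSetOf (C : Set G.E) : Set G.V := {v | ∃ e ∈ C, v ∈ G.ends e}

/-- No two edge-disjoint cycles share more than two vertices. -/
def NoTwoCyclesShareThree : Prop :=
  ∀ C1 C2 : Set G.E, G.IsCycle C1 → G.IsCycle C2 → Disjoint C1 C2 →
    (G.VertexSetOf C1 ∩ G.VertexSetOf C2).ncard ≤ 2

/-- An Eulerian multiedge: two vertices joined by an even positive number of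
parallel edges. -/
def IsEulerianMultiedge : Prop :=
  Nat.card G.V = 2 ∧ 0 < Nat.card G.E ∧ Even (Nat.card G.E)

end MGraph

/-- Isomorphism of multigraphs. -/
structure MIso (G H : MGraph) where
  vEquiv : G.V ≃ H.V
  eEquiv : G.E ≃ H.E
  ends_eq : ∀ e, H.ends (eEquiv e) = (G.ends e).map vEquiv

namespace MGraph

/-- Vertex-identification: glue `u1 ∈ V(G1)` with `u2 ∈ V(G2)`. -/
noncomputable def vertexIdent (G1 G2 : MGraph) (u1 : G1.V) (u2 : G2.V) : MGraph where
  V := G1.V ⊕ {v : G2.V // v ≠ u2}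
  E := G1.E ⊕ G2.E
  finV := by have := G1.finV; have := G2.finV; infer_instance
  finE := by have := G1.finE; have := G2.finE; infer_instance
  ends := fun e =>
    match e with
    | Sum.inl e => (G1.ends e).map Sum.inl
    | Sum.inr e => (G2.ends e).map
        (fun v => if h : v = u2 then Sum.inl u1 else Sum.inr ⟨v, h⟩)
  noLoop := by
    rintro (e | e) h
    · exact G1.noLoop e ((Sym2.isDiag_map Sum.inl_injective).mp h)
    · refine G2.noLoop e ((Sym2.isDiag_map ?_).mp h)
      intro a b hab
      by_cases ha : a = u2 <;> by_cases hb : b = u2 <;>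
        simp [ha, hb] at hab ⊢ <;> simp_all

/-- Edge-identification: delete `e1` and `e2` (with endpoints `u1, v1` resp.
`u2, v2`) and add the new edges `u1u2` and `v1v2`. -/
def edgeIdent (G1 G2 : MGraph) (e1 : G1.E) (e2 : G2.E)
    (u1 v1 : G1.V) (u2 v2 : G2.V) : MGraph where
  V := G1.V ⊕ G2.V
  E := {e : G1.E // e ≠ e1} ⊕ {e : G2.E // e ≠ e2} ⊕ Bool
  finV := by have := G1.finV; have := G2.finV; infer_instance
  finE := by have := G1.finE; have := G2.finE; infer_instance
  ends := fun e =>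
    match e with
    | Sum.inl e => (G1.ends e.1).map Sum.inl
    | Sum.inr (Sum.inl e) => (G2.ends e.1).map Sum.inr
    | Sum.inr (Sum.inr true) => s(Sum.inl u1, Sum.inr u2)
    | Sum.inr (Sum.inr false) => s(Sum.inl v1, Sum.inr v2)
  noLoop := by
    rintro (e | e | b) h
    · exact G1.noLoop e.1 ((Sym2.isDiag_map Sum.inl_injective).mp h)
    · exact G2.noLoop e.1 ((Sym2.isDiag_map Sum.inr_injective).mp h)
    · cases b <;> simp [Sym2.mk_isDiag_iff] at h

/-- Vertex-edge-identification: identify `v1` with `v2`, delete `e1 = u1v1`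
and `e2 = u2v2`, and add a new edge `u1u2`. -/
noncomputable def vertexEdgeIdent (G1 G2 : MGraph) (e1 : G1.E) (e2 : G2.E)
    (u1 v1 : G1.V) (u2 v2 : G2.V) (h2 : G2.ends e2 = s(u2, v2)) : MGraph where
  V := G1.V ⊕ {w : G2.V // w ≠ v2}
  E := {e : G1.E // e ≠ e1} ⊕ {e : G2.E // e ≠ e2} ⊕ Unit
  finV := by have := G1.finV; have := G2.finV; infer_instance
  finE := by have := G1.finE; have := G2.finE; infer_instance
  ends := fun e =>
    match e with
    | Sum.inl e => (G1.ends e.1).map Sum.inl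
    | Sum.inr (Sum.inl e) => (G2.ends e.1).map
        (fun w => if h : w = v2 then Sum.inl v1 else Sum.inr ⟨w, h⟩)
    | Sum.inr (Sum.inr _) =>
        s(Sum.inl u1, Sum.inr ⟨u2, fun h =>
          G2.noLoop e2 (by rw [h2, h]; exact Sym2.mk_isDiag_iff.mpr rfl)⟩)
  noLoop := by
    rintro (e | e | u) h
    · exact G1.noLoop e.1 ((Sym2.isDiag_map Sum.inl_injective).mp h)
    · refine G2.noLoop e.1 ((Sym2.isDiag_map ?_).mp h)
      intro a b hab
      by_cases ha : a = v2 <;> by_cases hb : b = v2 <;>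
        simp [ha, hb] at hab ⊢ <;> simp_all
    · simp [Sym2.mk_isDiag_iff] at h

/-- Delete an edge from a multigraph. -/
def deleteEdge (G : MGraph) (e : G.E) : MGraph where
  V := G.V
  E := {f : G.E // f ≠ e}
  finV := G.finV
  finE := by have := G.finE; infer_instance
  ends := fun f => G.ends f.1
  noLoop := fun f => G.noLoop f.1

/-- `Sym2.pmap`-style map into a subtype. -/
noncomputable def sym2Pmap {α β : Type} {p : α → Prop} (f : ∀ a, p a → β)
    (s : Sym2 α) (h : ∀ a ∈ s, p a) : Sym2 β :=
  let z := Classical.choose (Quot.exists_rep s)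
  s(f z.1 (h z.1 (by
      have hz : Quot.mk _ z = s := Classical.choose_spec (Quot.exists_rep s)
      rw [← hz]; exact Sym2.mem_mk_left z.1 z.2)),
    f z.2 (h z.2 (by
      have hz : Quot.mk _ z = s := Classical.choose_spec (Quot.exists_rep s)
      rw [← hz]; exact Sym2.mem_mk_right z.1 z.2)))

/-- Delete a vertex (and all incident edges) from a multigraph. -/
noncomputable def deleteVertex (G : MGraph) (v : G.V) : MGraph where
  V := {w : G.V // w ≠ v}
  E := {e : G.E // v ∉ G.ends e}
  finV := by have := G.finV; infer_instance
  finE := by have := G.finE; infer_instance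
  ends := fun e => sym2Pmap (fun a ha => (⟨a, ha⟩ : {w : G.V // w ≠ v}))
    (G.ends e.1) (fun a ha hav => e.2 (hav ▸ ha))
  noLoop := by
    rintro ⟨e, he⟩ h
    apply G.noLoop e
    unfold sym2Pmap at h
    have hz : Quot.mk _ (Classical.choose (Quot.exists_rep (G.ends e))) = G.ends e :=
      Classical.choose_spec (Quot.exists_rep (G.ends e))
    rw [Sym2.mk_isDiag_iff] at h
    have : (Classical.choose (Quot.exists_rep (G.ends e))).1 =
        (Classical.choose (Quot.exists_rep (G.ends e))).2 := congrArg Subtype.val h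
    rw [← hz]
    exact Sym2.mk_isDiag_iff.mpr this

end MGraph

/-- A tree decomposition of a multigraph: a tree of bags covering all vertices
and edges such that the bags containing a given vertex form a subtree. -/
structure TreeDecomp (G : MGraph) where
  ι : Type
  t : SimpleGraph ι
  isTree : t.IsTree
  bag : ι → Set G.V
  covers_vertex : ∀ v : G.V, ∃ i, v ∈ bag i
  covers_edge : ∀ e : G.E, ∃ i, ∀ v ∈ G.ends e, v ∈ bag i
  bags_connected : ∀ v : G.V, (SimpleGraph.induce {i | v ∈ bag i} t).Connected

namespace MGraph

/-- The graph has treewidth at most `k`. -/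
def twLE (G : MGraph) (k : ℕ) : Prop :=
  ∃ T : TreeDecomp G, ∀ i, (T.bag i).ncard ≤ k + 1

/-- Treewidth of a multigraph. -/
noncomputable def treewidth (G : MGraph) : ℕ := sInf {k | G.twLE k}

/-- The closed necklace on `n ≥ 2` vertices: a cycle of length `n` with all
of its edges doubled. -/
def necklace (n : ℕ) (hn : 2 ≤ n) : MGraph where
  V := ZMod n
  E := ZMod n × Bool
  finV := by have : NeZero n := ⟨by omega⟩; infer_instance
  finE := by have : NeZero n := ⟨by omega⟩; infer_instance
  ends := fun e => s(e.1, e.1 + 1)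
  noLoop := by
    have : Fact (1 < n) := ⟨hn⟩
    intro e h
    rw [Sym2.mk_isDiag_iff] at h
    exact one_ne_zero (left_eq_add.mp h)

end MGraph

/-!
Upper bounds: glue tree decompositions of `G1` and `G2` of width `k` along a bag containing the
identified vertex, or through one or two extra bags `{u1, v1, u2}`, `{v1, u2, v2}` covering the
new edges; this keeps the width at most `max 2 k`.

Lower bounds: each `Gi` is a minor of the glued graph. For vertex-identification it is a
subgraph; otherwise contract the other side, which stays connected after losing its edge because
it is 2-edge-connected, onto an end of the deleted edge `ei`, which that contraction restores.
Finally the new edge `u1u2` lies on a cycle with a third vertex, again by 2-edge-connectivity, so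
the graph has a `K₃`-minor and treewidth at least `2`, by the Helly property of subtrees.
-/

namespace SimpleGraph

variable {V W : Type*} {G : SimpleGraph V} {H : SimpleGraph W}

lemma Reachable.of_adj_imp_eq_or_adj {f : V → W}
    (hf : ∀ ⦃x y⦄, G.Adj x y → f x = f y ∨ H.Adj (f x) (f y)) {x y : V}
    (h : G.Reachable x y) : H.Reachable (f x) (f y) := by
  obtain ⟨p⟩ := h
  induction p with
  | nil => rfl
  | cons hadj _ ih =>
    rcases hf hadj with heq | hadj'
    · rwa [heq]
    · exact hadj'.reachable.trans ih

lemma IsBridge.sum_inl {x y : V} (h : G.IsBridge s(x, y)) :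
    (G ⊕g H).IsBridge s(.inl x, .inl y) := by
  refine fun hr => h ?_
  refine hr.of_adj_imp_eq_or_adj (f := Sum.elim id fun _ => x) ?_
  rintro (a | a) (b | b) hab <;> simp_all

lemma IsBridge.sum_inr {x y : W} (h : H.IsBridge s(x, y)) :
    (G ⊕g H).IsBridge s(.inr x, .inr y) := by
  refine fun hr => h ?_
  refine hr.of_adj_imp_eq_or_adj (f := Sum.elim (fun _ => x) id) ?_
  rintro (a | a) (b | b) hab <;> simp_all

lemma IsAcyclic.sum (hG : G.IsAcyclic) (hH : H.IsAcyclic) : (G ⊕g H).IsAcyclic := by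
  rw [isAcyclic_iff_forall_adj_isBridge] at hG hH ⊢
  rintro (a | a) (b | b) hab
  · exact (hG (sum_adj_inl.mp hab)).sum_inl
  · simp at hab
  · simp at hab
  · exact (hH (sum_adj_inr.mp hab)).sum_inr

lemma IsTree.sum_sup_edge (hG : G.IsTree) (hH : H.IsTree) (v : V) (w : W) :
    ((G ⊕g H) ⊔ edge (Sum.inl v) (Sum.inr w)).IsTree :=
  ⟨hG.connected.sum_sup_edge hH.connected,
    (hG.isAcyclic.sum hH.isAcyclic).sup_edge_of_not_reachable (not_reachable_sum_inl_inr v w)⟩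

lemma Preconnected.induce_image (f : G →g H) {s : Set V} (hs : (G.induce s).Preconnected) :
    (H.induce (f '' s)).Preconnected := by
  let φ : G.induce s →g H.induce (f '' s) :=
    ⟨fun x => ⟨f x, Set.mem_image_of_mem f x.2⟩, fun h => f.map_adj h⟩
  refine hs.map φ ?_
  rintro ⟨_, x, hx, rfl⟩
  exact ⟨⟨x, hx⟩, rfl⟩

lemma Preconnected.induce_union {s t : Set V} (hs : (G.induce s).Preconnected)
    (ht : (G.induce t).Preconnected)
    (hst : s.Nonempty → t.Nonempty → ∃ v ∈ s, ∃ w ∈ t, G.Adj v w) :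
    (G.induce (s ∪ t)).Preconnected := by
  rcases s.eq_empty_or_nonempty with rfl | hs'
  · rwa [Set.empty_union]
  rcases t.eq_empty_or_nonempty with rfl | ht'
  · rwa [Set.union_empty]
  obtain ⟨v, hv, w, hw, hvw⟩ := hst hs' ht'
  exact (connected_induce_union hs ht hv hw hvw).preconnected

lemma Walk.IsPath.append_of_support_inter {u v w : V} {p : G.Walk u v} {q : G.Walk v w}
    (hp : p.IsPath) (hq : q.IsPath) (h : ∀ x ∈ p.support, x ∈ q.support → x = v) :
    (p.append q).IsPath := by
  have hq' := hq.support_nodup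
  rw [← q.cons_tail_support, List.nodup_cons] at hq'
  rw [Walk.isPath_def, Walk.support_append]
  refine hp.support_nodup.append hq'.2 fun x hxp hxq => ?_
  obtain rfl := h x hxp (List.mem_of_mem_tail hxq)
  exact hq'.1 hxq

/-- The path is the only one, so it agrees with a path inside `s`. -/
lemma IsAcyclic.support_subset_of_isPath (hG : G.IsAcyclic) {s : Set V}
    (hs : (G.induce s).Preconnected) {x y : V} (hx : x ∈ s) (hy : y ∈ s) {p : G.Walk x y}
    (hp : p.IsPath) : ∀ z ∈ p.support, z ∈ s := by
  obtain ⟨q⟩ := hs ⟨x, hx⟩ ⟨y, hy⟩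
  let q' := q.map (Embedding.induce s).toHom
  have hpq : p = q'.bypass := congrArg Subtype.val <|
    (hG.subsingleton_path x y).elim ⟨p, hp⟩ ⟨_, q'.bypass_isPath⟩
  intro z hz
  rw [hpq] at hz
  have hz' := q'.support_bypass_subset_support hz
  rw [Walk.support_map] at hz'
  obtain ⟨⟨z, hzs⟩, -, rfl⟩ := List.mem_map.mp hz'
  exact hzs

/-- Helly property of subtrees: the first vertex of the path from `b` to `a` that lies on the path
from `a` to `c` is also on the path from `b` to `c`. -/
lemma IsAcyclic.exists_mem_inter_of_pairwise (hG : G.IsAcyclic) {s₁ s₂ s₃ : Set V}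
    (h₁ : (G.induce s₁).Preconnected) (h₂ : (G.induce s₂).Preconnected)
    (h₃ : (G.induce s₃).Preconnected) {a b c : V} (ha : a ∈ s₁ ∩ s₂)
    (hb : b ∈ s₂ ∩ s₃) (hc : c ∈ s₃ ∩ s₁) : (s₁ ∩ s₂ ∩ s₃).Nonempty := by
  classical
  have hba : G.Reachable b a := (h₂ ⟨b, hb.1⟩ ⟨a, ha.2⟩).map (Embedding.induce s₂).toHom
  have hac : G.Reachable a c := (h₁ ⟨a, ha.1⟩ ⟨c, hc.2⟩).map (Embedding.induce s₁).toHom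
  obtain ⟨pba, hpba⟩ := hba.exists_isPath
  obtain ⟨pac, hpac⟩ := hac.exists_isPath
  obtain ⟨m, hm, hmba, hfirst⟩ := pba.exists_mem_support_forall_mem_support_imp_eq
    pac.support.toFinset ⟨a, by simp⟩
  rw [List.mem_toFinset] at hm
  have hpbc : ((pba.takeUntil m hmba).append (pac.dropUntil m hm)).IsPath :=
    (hpba.takeUntil hmba).append_of_support_inter (hpac.dropUntil hm) fun x hx hx' =>
      hfirst x (List.mem_toFinset.mpr (pac.support_dropUntil_subset_support hm hx')) hx
  refine ⟨m, ⟨hG.support_subset_of_isPath h₁ ha.1 hc.2 hpac m hm,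
    hG.support_subset_of_isPath h₂ hb.1 ha.2 hpba m hmba⟩,
    hG.support_subset_of_isPath h₃ hb.2 hc.1 hpbc m ?_⟩
  simp

end SimpleGraph

lemma Relation.ReflTransGen.exists_step_into {α : Type*} {r : α → α → Prop} {s : Set α}
    {a b : α} (h : Relation.ReflTransGen r a b) (ha : a ∉ s) (hb : b ∈ s) :
    ∃ c d,
      Relation.ReflTransGen (fun x y => x ∉ s ∧ y ∉ s ∧ r x y) a c ∧ r c d ∧ d ∈ s := by
  induction h using Relation.ReflTransGen.head_induction_on with
  | refl => exact absurd hb ha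
  | @head a a' haa' _ ih =>
    by_cases ha' : a' ∈ s
    · exact ⟨a, a', .refl, haa', ha'⟩
    · obtain ⟨c, d, hac, hcd, hd⟩ := ih ha'
      exact ⟨c, d, .head ⟨ha, ha', haa'⟩ hac, hcd, hd⟩

lemma Set.ncard_triple_le {α : Type*} (a b c : α) : ({a, b, c} : Set α).ncard ≤ 3 :=
  (Set.ncard_insert_le a _).trans (Nat.succ_le_succ ((Set.ncard_insert_le b _).trans (by simp)))

lemma Sum.inl_mem_insert_range_inr {α β : Type*} {a x : α} :
    (Sum.inl x : α ⊕ β) ∈ insert (Sum.inl a) (Set.range Sum.inr) ↔ x = a := by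
  simp

lemma Sum.inr_mem_insert_range_inl {α β : Type*} {b y : β} :
    (Sum.inr y : α ⊕ β) ∈ insert (Sum.inr b) (Set.range Sum.inl) ↔ y = b := by
  simp

/-- The vertex map of the second graph in `vertexIdent` and `vertexEdgeIdent`, where its vertex
`b` is identified with the vertex `a` of the first. -/
noncomputable def glueMap {α β : Type} (a : α) (b : β) (y : β) : α ⊕ {y : β // y ≠ b} :=
  if h : y = b then .inl a else .inr ⟨y, h⟩

section glueMap

variable {α β : Type} (a : α) (b : β)

@[simp]
lemma glueMap_self : glueMap a b b = .inl a := dif_pos rfl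

lemma glueMap_of_ne {y : β} (h : y ≠ b) : glueMap a b y = .inr ⟨y, h⟩ := dif_neg h

@[simp]
lemma glueMap_eq_inl_iff {x : α} {y : β} : glueMap a b y = .inl x ↔ y = b ∧ x = a := by
  by_cases h : y = b
  · subst h
    simp [eq_comm]
  · simp [glueMap_of_ne a b h, h]

lemma glueMap_injective : (glueMap a b).Injective := by
  intro y y' hyy'
  by_cases h : y = b
  · subst h
    exact ((glueMap_eq_inl_iff a y).mp (hyy'.symm.trans (glueMap_self a y))).1.symm
  by_cases h' : y' = b
  · subst h'
    exact ((glueMap_eq_inl_iff a y').mp (hyy'.trans (glueMap_self a y'))).1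
  rw [glueMap_of_ne a b h, glueMap_of_ne a b h'] at hyy'
  exact congrArg Subtype.val (Sum.inr_injective hyy')

end glueMap

namespace MGraph

open Relation

variable {G H : MGraph}

lemma ne_of_ends_eq {e : G.E} {u v : G.V} (h : G.ends e = s(u, v)) : u ≠ v := by
  rintro rfl
  exact G.noLoop e (h ▸ Sym2.mk_isDiag_iff.mpr rfl)

lemma AdjOn.symm {F : Set G.E} {a b : G.V} (h : G.AdjOn F a b) : G.AdjOn F b a :=
  let ⟨e, he, hab⟩ := h
  ⟨e, he, hab.trans Sym2.eq_swap⟩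

lemma AdjOn.ne {F : Set G.E} {a b : G.V} (h : G.AdjOn F a b) : a ≠ b :=
  let ⟨_, _, hab⟩ := h
  ne_of_ends_eq hab

lemma TwoEdgeConnected.reachOn_compl (h : G.TwoEdgeConnected) (e : G.E) (a b : G.V) :
    G.ReachOn {e}ᶜ a b := by
  induction h.1.2 a b with
  | refl => exact .refl
  | @tail c d _ hcd ih =>
    obtain ⟨f, -, hf⟩ := hcd
    by_cases hfe : f = e
    · subst hfe
      have hf' := h.2 f
      simp only [IsBridge, not_exists, not_and, not_not] at hf'
      exact ih.trans (hf' c d hf)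
    · exact ih.tail ⟨f, hfe, hf⟩

/-- `G.ReachAvoid v` is reachability for `G.AdjWithin {v}ᶜ`. -/
def AdjWithin (S : Set G.V) (a b : G.V) : Prop := a ∈ S ∧ b ∈ S ∧ G.AdjOn Set.univ a b

instance (S : Set G.V) : Std.Symm (G.AdjWithin S) := ⟨fun _ _ h => ⟨h.2.1, h.1, h.2.2.symm⟩⟩

def ConnectedSet (S : Set G.V) : Prop :=
  S.Nonempty ∧ ∀ x ∈ S, ∀ y ∈ S, ReflTransGen (G.AdjWithin S) x y

lemma connectedSet_singleton (v : G.V) : G.ConnectedSet {v} :=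
  ⟨⟨v, rfl⟩, by rintro x rfl y rfl; exact .refl⟩

lemma connectedSet_of_reach {S : Set G.V} {c : G.V} (hc : c ∈ S)
    (h : ∀ x ∈ S, ReflTransGen (G.AdjWithin S) c x) : G.ConnectedSet S :=
  ⟨⟨c, hc⟩, fun x hx y hy => (Std.Symm.symm _ _ (h x hx)).trans (h y hy)⟩

lemma reflTransGen_adjWithin_mono {S T : Set G.V} (hST : S ⊆ T) {x y : G.V}
    (h : ReflTransGen (G.AdjWithin S) x y) : ReflTransGen (G.AdjWithin T) x y :=
  ReflTransGen.mono (fun _ _ hab => ⟨hST hab.1, hST hab.2.1, hab.2.2⟩) _ _ h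

lemma connectedSet_setOf_reflTransGen (S : Set G.V) (c : G.V) :
    G.ConnectedSet {z | ReflTransGen (G.AdjWithin S) c z} := by
  refine connectedSet_of_reach .refl fun x hx => ?_
  induction hx with
  | refl => exact .refl
  | @tail y z hcy hyz ih => exact ih.tail ⟨hcy, hcy.tail hyz, hyz.2.2⟩

lemma ConnectedSet.insert_of_adj {S : Set G.V} (hS : G.ConnectedSet S) {x s : G.V} (hs : s ∈ S)
    (hxs : G.AdjOn Set.univ x s) : G.ConnectedSet (insert x S) := by
  have hsub : S ⊆ insert x S := Set.subset_insert x S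
  refine connectedSet_of_reach (Set.mem_insert_of_mem x hs) fun y hy => ?_
  rcases hy with rfl | hy
  · exact .single ⟨hsub hs, Set.mem_insert y S, hxs.symm⟩
  · exact reflTransGen_adjWithin_mono hsub (hS.2 s hs y hy)

lemma ReachOn.map {F : Set H.E} {S : Set G.V} {f : H.V → G.V} (hS : ∀ x, f x ∈ S)
    (hf : ∀ e ∈ F, ∃ e', G.ends e' = (H.ends e).map f) {a b : H.V} (h : H.ReachOn F a b) :
    ReflTransGen (G.AdjWithin S) (f a) (f b) := by
  refine ReflTransGen.lift f (fun x y ⟨e, he, hxy⟩ => ?_) _ _ h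
  obtain ⟨e', he'⟩ := hf e he
  exact ⟨hS x, hS y, e', trivial, by rw [he', hxy, Sym2.map_mk]⟩

lemma connectedSet_range {F : Set H.E} (hH : ∀ a b, H.ReachOn F a b) [Nonempty H.V]
    {f : H.V → G.V} (hf : ∀ e ∈ F, ∃ e', G.ends e' = (H.ends e).map f) :
    G.ConnectedSet (Set.range f) := by
  inhabit H.V
  refine connectedSet_of_reach (Set.mem_range_self default) ?_
  rintro _ ⟨x, rfl⟩
  exact (hH default x).map Set.mem_range_self hf

end MGraph

/-- A tree decomposition without the covering conditions, so a vertex may lie in no bag. -/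
structure BagTree (V : Type) where
  ι : Type
  t : SimpleGraph ι
  isTree : t.IsTree
  bag : ι → Set V
  preconnected : ∀ v, (t.induce {i | v ∈ bag i}).Preconnected

namespace BagTree

open SimpleGraph

variable {V : Type}

def support (A : BagTree V) : Set V := ⋃ i, A.bag i

def HasBag (A : BagTree V) (B : Set V) : Prop := ∃ i, B ⊆ A.bag i

abbrev single (B : Set V) : BagTree V where
  ι := Unit
  t := ⊥
  isTree := (IsTree.of_subsingleton : (⊥ : SimpleGraph Unit).IsTree)
  bag _ := B
  preconnected _ := .of_subsingleton

@[simp]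
lemma support_single (B : Set V) : (single B).support = B :=
  Set.iUnion_const (ι := Unit) B

lemma HasBag.mono {A : BagTree V} {S T : Set V} (hS : A.HasBag S) (hT : T ⊆ S) : A.HasBag T :=
  let ⟨i, hi⟩ := hS
  ⟨i, hT.trans hi⟩

lemma hasBag_single (B : Set V) : (single B).HasBag B := ⟨(), subset_rfl⟩

abbrev ofTreeDecomp {H : MGraph} (T : TreeDecomp H) {f : H.V → V} (hf : f.Injective) :
    BagTree V where
  ι := T.ι
  t := T.t
  isTree := T.isTree
  bag i := f '' T.bag i
  preconnected v := by
    by_cases hv : v ∈ Set.range f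
    · obtain ⟨x, rfl⟩ := hv
      rw [show {i | f x ∈ f '' T.bag i} = {i | x ∈ T.bag i} from
        Set.ext fun _ => hf.mem_set_image]
      exact (T.bags_connected x).preconnected
    · have : {i | v ∈ f '' T.bag i} = ∅ :=
        Set.eq_empty_of_forall_notMem fun i ⟨x, _, hx⟩ => hv ⟨x, hx⟩
      rw [this]
      exact .of_subsingleton

section ofTreeDecomp

variable {H : MGraph} (T : TreeDecomp H) {f : H.V → V} (hf : f.Injective)

@[simp]
lemma support_ofTreeDecomp : (ofTreeDecomp T hf).support = Set.range f := by
  refine (Set.iUnion_subset fun _ => Set.image_subset_range f _).antisymm ?_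
  rintro _ ⟨x, rfl⟩
  obtain ⟨i, hi⟩ := T.covers_vertex x
  exact Set.mem_iUnion.mpr ⟨i, Set.mem_image_of_mem f hi⟩

lemma hasBag_ofTreeDecomp_vertex (x : H.V) : (ofTreeDecomp T hf).HasBag {f x} :=
  let ⟨i, hi⟩ := T.covers_vertex x
  ⟨i, Set.singleton_subset_iff.mpr (Set.mem_image_of_mem f hi)⟩

lemma hasBag_ofTreeDecomp_ends (e : H.E) :
    (ofTreeDecomp T hf).HasBag {w | w ∈ (H.ends e).map f} := by
  obtain ⟨i, hi⟩ := T.covers_edge e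
  refine ⟨i, fun w hw => ?_⟩
  obtain ⟨x, hx, rfl⟩ := Sym2.mem_map.mp hw
  exact Set.mem_image_of_mem f (hi x hx)

lemma ncard_bag_ofTreeDecomp_le {n : ℕ} (hT : ∀ i, (T.bag i).ncard ≤ n) (i : T.ι) :
    ((ofTreeDecomp T hf).bag i).ncard ≤ n := by
  have := H.finV
  exact (Set.ncard_image_le (Set.toFinite _)).trans (hT i)

end ofTreeDecomp

abbrev join (A B : BagTree V) (i : A.ι) (j : B.ι)
    (h : A.support ∩ B.support ⊆ A.bag i ∩ B.bag j) : BagTree V where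
  ι := A.ι ⊕ B.ι
  t := (A.t ⊕g B.t) ⊔ edge (.inl i) (.inr j)
  isTree := A.isTree.sum_sup_edge B.isTree i j
  bag := Sum.elim A.bag B.bag
  preconnected v := by
    have hset : {k | v ∈ Sum.elim A.bag B.bag k} =
        Sum.inl '' {a | v ∈ A.bag a} ∪ Sum.inr '' {b | v ∈ B.bag b} := by
      ext (a | b) <;> simp
    rw [hset]
    refine .induce_union
      ((A.preconnected v).induce_image ((Hom.ofLE le_sup_left).comp Embedding.sumInl.toHom))
      ((B.preconnected v).induce_image ((Hom.ofLE le_sup_left).comp Embedding.sumInr.toHom))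
      fun ⟨_, ⟨a, ha, rfl⟩⟩ ⟨_, ⟨b, hb, rfl⟩⟩ => ?_
    obtain ⟨hi, hj⟩ := h ⟨Set.mem_iUnion.mpr ⟨a, ha⟩, Set.mem_iUnion.mpr ⟨b, hb⟩⟩
    exact ⟨_, ⟨i, hi, rfl⟩, _, ⟨j, hj, rfl⟩, Or.inr (by simp [edge_adj])⟩

section join

variable {A B : BagTree V} {i : A.ι} {j : B.ι}
  {h : A.support ∩ B.support ⊆ A.bag i ∩ B.bag j}

@[simp]
lemma support_join : (join A B i j h).support = A.support ∪ B.support := by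
  simp [support, join, Set.iUnion_sum]

lemma HasBag.join_left {S : Set V} (hS : A.HasBag S) : (join A B i j h).HasBag S :=
  let ⟨a, ha⟩ := hS
  ⟨.inl a, ha⟩

lemma HasBag.join_right {S : Set V} (hS : B.HasBag S) : (join A B i j h).HasBag S :=
  let ⟨b, hb⟩ := hS
  ⟨.inr b, hb⟩

lemma ncard_bag_join_le {n : ℕ} (hA : ∀ a, (A.bag a).ncard ≤ n)
    (hB : ∀ b, (B.bag b).ncard ≤ n) :
    ∀ k, ((join A B i j h).bag k).ncard ≤ n :=
  Sum.rec hA hB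

end join

def toTreeDecomp {G : MGraph} (A : BagTree G.V) (hv : ∀ v, A.HasBag {v})
    (he : ∀ e, A.HasBag {v | v ∈ G.ends e}) : TreeDecomp G where
  ι := A.ι
  t := A.t
  isTree := A.isTree
  bag := A.bag
  covers_vertex v := let ⟨i, hi⟩ := hv v; ⟨i, hi rfl⟩
  covers_edge e := he e
  bags_connected v :=
    let ⟨i, hi⟩ := hv v
    (connected_iff _).mpr ⟨A.preconnected v, ⟨⟨i, hi rfl⟩⟩⟩

end BagTree

namespace MGraph

open Relation

variable {G H : MGraph}

lemma mem_of_reflTransGen_adjWithin {S : Set G.V} {x y : G.V}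
    (h : ReflTransGen (G.AdjWithin S) x y) (hx : x ∈ S) : y ∈ S := by
  rcases h.cases_tail with rfl | ⟨_, _, hzy⟩
  exacts [hx, hzy.2.1]

lemma _root_.TreeDecomp.exists_mem_bag_of_ends (T : TreeDecomp G) {e : G.E} {u v : G.V}
    (h : G.ends e = s(u, v)) : ∃ i, u ∈ T.bag i ∧ v ∈ T.bag i :=
  let ⟨i, hi⟩ := T.covers_edge e
  ⟨i, hi u (by simp [h]), hi v (by simp [h])⟩

lemma twLE_of_bagTree (A : BagTree G.V) (hv : ∀ v, A.HasBag {v})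
    (he : ∀ e, A.HasBag {v | v ∈ G.ends e}) {k : ℕ} (hk : ∀ i, (A.bag i).ncard ≤ k + 1) :
    G.twLE k :=
  ⟨A.toTreeDecomp hv he, hk⟩

lemma twLE_card (G : MGraph) : G.twLE (Nat.card G.V) :=
  twLE_of_bagTree (.single .univ) (fun _ => ⟨(), Set.subset_univ _⟩)
    (fun _ => ⟨(), Set.subset_univ _⟩) fun _ => (Set.ncard_univ G.V).trans_le (Nat.le_succ _)

lemma twLE_treewidth (G : MGraph) : G.twLE G.treewidth :=
  Nat.sInf_mem (s := {k | G.twLE k}) ⟨_, G.twLE_card⟩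

lemma twLE.mono {k k' : ℕ} (h : G.twLE k) (hk : k ≤ k') : G.twLE k' :=
  let ⟨T, hT⟩ := h
  ⟨T, fun i => (hT i).trans (by omega)⟩

lemma treewidth_le_iff {k : ℕ} : G.treewidth ≤ k ↔ G.twLE k :=
  ⟨G.twLE_treewidth.mono, fun h => Nat.sInf_le h⟩

lemma treewidth_le_of_embedding (f : H.V → G.V) (hf : f.Injective) (g : H.E → G.E)
    (hg : ∀ e, G.ends (g e) = (H.ends e).map f) : H.treewidth ≤ G.treewidth := by
  have := G.finV
  obtain ⟨T, hT⟩ := G.twLE_treewidth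
  refine treewidth_le_iff.mpr ⟨⟨T.ι, T.t, T.isTree, fun i => f ⁻¹' T.bag i, fun v => ?_,
    fun e => ?_, fun v => T.bags_connected (f v)⟩, fun i => ?_⟩
  · exact T.covers_vertex (f v)
  · obtain ⟨i, hi⟩ := T.covers_edge (g e)
    exact ⟨i, fun v hv => hi (f v) (by rw [hg]; exact Sym2.mem_map.mpr ⟨v, hv, rfl⟩)⟩
  · rw [← Set.ncard_image_of_injective _ hf]
    exact (Set.ncard_le_ncard (Set.image_preimage_subset f _) (Set.toFinite _)).trans (hT i)

lemma _root_.TreeDecomp.connected_induce_bagsMeeting (T : TreeDecomp G) {S : Set G.V}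
    (hS : G.ConnectedSet S) : (T.t.induce {i | ∃ v ∈ S, v ∈ T.bag i}).Connected := by
  set U := {i | ∃ v ∈ S, v ∈ T.bag i}
  have hbag : ∀ v (hv : v ∈ S) i j (hi : v ∈ T.bag i) (hj : v ∈ T.bag j),
      (T.t.induce U).Reachable ⟨i, v, hv, hi⟩ ⟨j, v, hv, hj⟩ := fun v hv i j hi hj =>
    ((T.bags_connected v).preconnected (⟨i, hi⟩ : {k | v ∈ T.bag k}) ⟨j, hj⟩).map
      (T.t.induceHomOfLE (fun k hk => ⟨v, hv, hk⟩ : {k | v ∈ T.bag k} ⊆ U)).toHom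
  obtain ⟨⟨x, hx⟩, hconn⟩ := hS
  obtain ⟨i, hi⟩ := T.covers_vertex x
  refine (SimpleGraph.connected_iff_exists_forall_reachable _).mpr ⟨⟨i, x, hx, hi⟩, ?_⟩
  rintro ⟨j, y, hy, hj⟩
  induction hconn x hx y hy generalizing j with
  | refl => exact hbag x hx i j hi hj
  | @tail c d _ hcd ih =>
    obtain ⟨e, -, he⟩ := hcd.2.2
    obtain ⟨m, hm⟩ := T.covers_edge e
    exact (ih m hcd.1 (hm c (by simp [he]))).trans (hbag d hy m j (hm d (by simp [he])) hj)

lemma treewidth_le_of_contract (φ : G.V → H.V) (hφ : φ.Surjective)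
    (hedge : ∀ f : H.E, ∃ e : G.E, (G.ends e).map φ = H.ends f)
    (hfib : ∀ v, G.ConnectedSet (φ ⁻¹' {v})) : H.treewidth ≤ G.treewidth := by
  have := G.finV
  obtain ⟨T, hT⟩ := G.twLE_treewidth
  refine treewidth_le_iff.mpr ⟨⟨T.ι, T.t, T.isTree, fun i => φ '' T.bag i, fun v => ?_,
    fun f => ?_, fun v => ?_⟩, fun i => (Set.ncard_image_le (Set.toFinite _)).trans (hT i)⟩
  · obtain ⟨x, rfl⟩ := hφ v
    obtain ⟨i, hi⟩ := T.covers_vertex x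
    exact ⟨i, Set.mem_image_of_mem φ hi⟩
  · obtain ⟨e, he⟩ := hedge f
    obtain ⟨i, hi⟩ := T.covers_edge e
    refine ⟨i, fun v hv => ?_⟩
    obtain ⟨x, hx, rfl⟩ := Sym2.mem_map.mp (he ▸ hv)
    exact Set.mem_image_of_mem φ (hi x hx)
  · have hset : {i | v ∈ φ '' T.bag i} = {i | ∃ x ∈ φ ⁻¹' {v}, x ∈ T.bag i} := by
      ext
      simp [and_comm]
    rw [hset]
    exact T.connected_induce_bagsMeeting (hfib v)

/-- `H` is the minor of `G` obtained by contracting `C` onto `u`: an edge from `C` to `f v`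
becomes `e₀ = uv`, the only edge of `H` not already in `G`. -/
lemma treewidth_le_of_contract_onto (f : H.V → G.V) (hf : f.Injective) {C : Set G.V}
    (hC : G.ConnectedSet C) {e₀ : H.E} {u v : H.V} (he₀ : H.ends e₀ = s(u, v))
    (hCf : ∀ x, f x ∈ C ↔ x = u) (hcover : ∀ w ∉ C, w ∈ Set.range f)
    (hedge : ∀ e ≠ e₀, ∃ e', G.ends e' = (H.ends e).map f)
    (hadj : ∃ c ∈ C, G.AdjOn Set.univ c (f v)) : H.treewidth ≤ G.treewidth := by
  classical
  have : Nonempty H.V := ⟨u⟩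
  let φ : G.V → H.V := fun w => if w ∈ C then u else Function.invFun f w
  have hφf : ∀ x, φ (f x) = x := fun x => by
    by_cases hx : f x ∈ C
    · obtain rfl := (hCf x).mp hx
      simp [φ, hx]
    · simp [φ, hx, Function.leftInverse_invFun hf x]
  have hφC : ∀ w ∈ C, φ w = u := fun w hw => if_pos hw
  refine treewidth_le_of_contract φ (fun x => ⟨f x, hφf x⟩) (fun e => ?_) (fun x => ?_)
  · by_cases he : e = e₀
    · obtain ⟨c, hc, e', he'⟩ := hadj
      refine ⟨e', ?_⟩
      simp [he'.2, he, he₀, hφC c hc, hφf]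
    · obtain ⟨e', he'⟩ := hedge e he
      exact ⟨e', by simp [he', Sym2.map_map, hφf]⟩
  · by_cases hx : x = u
    · subst hx
      convert hC using 1
      ext w
      refine ⟨fun hw => by_contra fun hwC => ?_, fun hw => hφC w hw⟩
      obtain ⟨y, rfl⟩ := hcover w hwC
      rw [Set.mem_preimage, hφf, Set.mem_singleton_iff] at hw
      exact hwC ((hCf y).mpr hw)
    · convert connectedSet_singleton (f x) using 1
      ext w
      refine ⟨fun hw => ?_, fun hw => by rw [Set.mem_singleton_iff.mp hw]; exact hφf x⟩
      by_cases hwC : w ∈ C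
      · exact absurd ((hφC w hwC).symm.trans hw) (Ne.symm hx)
      · obtain ⟨y, rfl⟩ := hcover w hwC
        rw [Set.mem_preimage, hφf] at hw
        rw [hw]
        rfl

/-- By the Helly property of subtrees some bag meets all three branch sets of this `K₃`-minor. -/
lemma two_le_treewidth_of_triangle {A B C : Set G.V} (hA : G.ConnectedSet A) (hB : G.ConnectedSet B)
    (hC : G.ConnectedSet C) (hAB : Disjoint A B) (hBC : Disjoint B C) (hCA : Disjoint C A)
    (tAB : ∃ a ∈ A, ∃ b ∈ B, G.AdjOn Set.univ a b)
    (tBC : ∃ b ∈ B, ∃ c ∈ C, G.AdjOn Set.univ b c)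
    (tCA : ∃ c ∈ C, ∃ a ∈ A, G.AdjOn Set.univ c a) : 2 ≤ G.treewidth := by
  have := G.finV
  by_contra! hlt
  obtain ⟨T, hT⟩ := treewidth_le_iff.mp (Nat.le_of_lt_succ hlt)
  have touch : ∀ {X Y : Set G.V}, (∃ x ∈ X, ∃ y ∈ Y, G.AdjOn Set.univ x y) →
      ∃ i, i ∈ {i | ∃ v ∈ X, v ∈ T.bag i} ∩ {i | ∃ v ∈ Y, v ∈ T.bag i} := by
    rintro X Y ⟨x, hx, y, hy, e, -, he⟩
    obtain ⟨i, hi⟩ := T.covers_edge e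
    exact ⟨i, ⟨x, hx, hi x (by simp [he])⟩, ⟨y, hy, hi y (by simp [he])⟩⟩
  obtain ⟨_, hAB'⟩ := touch tAB
  obtain ⟨_, hBC'⟩ := touch tBC
  obtain ⟨_, hCA'⟩ := touch tCA
  obtain ⟨m, ⟨⟨a, ha, ham⟩, ⟨b, hb, hbm⟩⟩, ⟨c, hc, hcm⟩⟩ :=
    T.isTree.isAcyclic.exists_mem_inter_of_pairwise
      (T.connected_induce_bagsMeeting hA).preconnected
      (T.connected_induce_bagsMeeting hB).preconnected
      (T.connected_induce_bagsMeeting hC).preconnected hAB' hBC' hCA'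
  have h3 : ({a, b, c} : Set G.V).ncard = 3 := Set.ncard_eq_three.mpr
    ⟨a, b, c, hAB.ne_of_mem ha hb, (hCA.ne_of_mem hc ha).symm, hBC.ne_of_mem hb hc, rfl⟩
  have hle := Set.ncard_le_ncard (Set.insert_subset_iff.mpr ⟨ham, Set.insert_subset_iff.mpr
    ⟨hbm, Set.singleton_subset_iff.mpr hcm⟩⟩) (Set.toFinite (T.bag m))
  have := hT m
  omega

/-- `{a}`, `{b}` and the vertices reachable from `c` while avoiding `a` and `b` are the branch
sets of a `K₃`-minor. -/
lemma two_le_treewidth_of_reachAvoid {a b c : G.V} (hab : G.AdjOn Set.univ a b)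
    (hca : c ≠ a) (hcb : c ≠ b) (ha : G.ReachAvoid b c a) (hb : G.ReachAvoid a c b) :
    2 ≤ G.treewidth := by
  set C := {z | ReflTransGen (G.AdjWithin {a, b}ᶜ) c z}
  have hcC : c ∈ ({a, b}ᶜ : Set G.V) := by simp [hca, hcb]
  have hCab : C ⊆ {a, b}ᶜ := fun z hz => mem_of_reflTransGen_adjWithin hz hcC
  have touch : ∀ x y, ({x, y} : Set G.V) = {a, b} → G.ReachAvoid y c x →
      ∃ w ∈ C, G.AdjOn Set.univ w x := by
    intro x y hxy hx
    rw [← hxy] at hcC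
    obtain ⟨w, _, hcw, hwz, rfl⟩ :=
      ReflTransGen.exists_step_into (s := {x}) hx (fun h => hcC (Or.inl h)) rfl
    refine ⟨w, ReflTransGen.mono (fun p q ⟨hp, hq, hpq⟩ => ?_) _ _ hcw, hwz.2.2⟩
    rw [← hxy]
    exact ⟨fun h => h.elim hp hpq.1, fun h => h.elim hq hpq.2.1, hpq.2.2⟩
  have hdisj : ∀ x ∈ ({a, b} : Set G.V), Disjoint C {x} := fun x hx =>
    Set.disjoint_singleton_right.mpr fun h => hCab h hx
  obtain ⟨w₁, hw₁, hw₁a⟩ := touch a b rfl ha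
  obtain ⟨w₂, hw₂, hw₂b⟩ := touch b a (Set.pair_comm b a) hb
  exact two_le_treewidth_of_triangle (connectedSet_singleton a) (connectedSet_singleton b)
    (connectedSet_setOf_reflTransGen _ c) (Set.disjoint_singleton.mpr hab.ne)
    (hdisj b (by simp)).symm (hdisj a (by simp)) ⟨a, rfl, b, rfl, hab⟩
    ⟨b, rfl, w₂, hw₂, hw₂b.symm⟩ ⟨w₁, hw₁, a, rfl, hw₁a⟩

open BagTree

section vertexIdent

variable (G1 G2 : MGraph) (u1 : G1.V) (u2 : G2.V)

lemma vertexIdent_twLE {k : ℕ} (hG1 : G1.twLE k) (hG2 : G2.twLE k) :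
    (vertexIdent G1 G2 u1 u2).twLE k := by
  obtain ⟨T1, hT1⟩ := hG1
  obtain ⟨T2, hT2⟩ := hG2
  obtain ⟨i1, hi1⟩ := T1.covers_vertex u1
  obtain ⟨i2, hi2⟩ := T2.covers_vertex u2
  let A := ofTreeDecomp T1 (Sum.inl_injective (β := {y : G2.V // y ≠ u2}))
  let B := ofTreeDecomp T2 (glueMap_injective u1 u2)
  have hAB : A.support ∩ B.support ⊆ A.bag i1 ∩ B.bag i2 := by
    rintro _ ⟨hvA, hvB⟩
    simp only [A, B, support_ofTreeDecomp] at hvA hvB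
    obtain ⟨x, rfl⟩ := hvA
    obtain ⟨y, hy⟩ := hvB
    obtain ⟨rfl, rfl⟩ := (glueMap_eq_inl_iff u1 u2).mp hy
    exact ⟨⟨x, hi1, rfl⟩, ⟨y, hi2, hy⟩⟩
  refine twLE_of_bagTree (A.join B i1 i2 hAB) ?_ ?_
    (ncard_bag_join_le (ncard_bag_ofTreeDecomp_le T1 _ hT1) (ncard_bag_ofTreeDecomp_le T2 _ hT2))
  · rintro (x | ⟨y, hy⟩)
    · exact (hasBag_ofTreeDecomp_vertex T1 _ x).join_left
    · rw [← glueMap_of_ne u1 u2 hy]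
      exact (hasBag_ofTreeDecomp_vertex T2 _ y).join_right
  · rintro (e | e)
    · exact (hasBag_ofTreeDecomp_ends T1 _ e).join_left
    · exact (hasBag_ofTreeDecomp_ends T2 _ e).join_right

lemma vertexIdent_treewidth :
    (vertexIdent G1 G2 u1 u2).treewidth = max G1.treewidth G2.treewidth := by
  refine le_antisymm (treewidth_le_iff.mpr (vertexIdent_twLE G1 G2 u1 u2 ?_ ?_)) (max_le ?_ ?_)
  · exact G1.twLE_treewidth.mono (le_max_left _ _)
  · exact G2.twLE_treewidth.mono (le_max_right _ _)
  · exact treewidth_le_of_embedding Sum.inl Sum.inl_injective Sum.inl fun _ => rfl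
  · exact treewidth_le_of_embedding (glueMap u1 u2) (glueMap_injective u1 u2) Sum.inr fun _ => rfl

end vertexIdent

section edgeIdent

variable (G1 G2 : MGraph) {e1 : G1.E} {e2 : G2.E} {u1 v1 : G1.V} {u2 v2 : G2.V}

/-- The decomposition `T₁ — {u₁, v₁, u₂} — {v₁, u₂, v₂} — T₂`. -/
lemma edgeIdent_twLE (h1 : G1.ends e1 = s(u1, v1)) (h2 : G2.ends e2 = s(u2, v2)) {k : ℕ}
    (hk : 2 ≤ k) (hG1 : G1.twLE k) (hG2 : G2.twLE k) :
    (edgeIdent G1 G2 e1 e2 u1 v1 u2 v2).twLE k := by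
  obtain ⟨T1, hT1⟩ := hG1
  obtain ⟨T2, hT2⟩ := hG2
  obtain ⟨i1, hu1, hv1⟩ := T1.exists_mem_bag_of_ends h1
  obtain ⟨i2, hu2, hv2⟩ := T2.exists_mem_bag_of_ends h2
  have hne := ne_of_ends_eq h2
  let A := ofTreeDecomp T1 (Sum.inl_injective (β := G2.V))
  let B := ofTreeDecomp T2 (Sum.inr_injective (α := G1.V))
  let X : Set (G1.V ⊕ G2.V) := {.inl u1, .inl v1, .inr u2}
  let Y : Set (G1.V ⊕ G2.V) := {.inl v1, .inr u2, .inr v2}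
  have hAX : A.support ∩ (single X).support ⊆ A.bag i1 ∩ X := by
    rintro v ⟨hv, hvX⟩
    simp only [A, support_ofTreeDecomp, support_single] at hv hvX
    obtain ⟨x, rfl⟩ := hv
    rcases hvX with h | h | h <;> simp_all [A, X]
  let AX := A.join (single X) i1 () hAX
  have hAXY : AX.support ∩ (single Y).support ⊆ AX.bag (.inr ()) ∩ Y := by
    rintro v ⟨hv, hvY⟩
    simp only [AX, A, support_join, support_ofTreeDecomp, support_single] at hv hvY
    rcases hvY with rfl | rfl | rfl <;> simp_all [AX, X, Y]
  let AXY := AX.join (single Y) (.inr ()) () hAXY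
  have hAXYB : AXY.support ∩ B.support ⊆ AXY.bag (.inr ()) ∩ B.bag i2 := by
    rintro v ⟨hv, hvB⟩
    simp only [AXY, AX, A, B, support_join, support_ofTreeDecomp, support_single] at hv hvB
    obtain ⟨y, rfl⟩ := hvB
    have hy : y = u2 ∨ y = v2 := by simp_all [X, Y, or_comm]
    rcases hy with rfl | rfl <;> simp_all [AXY, B, Y]
  have hX : ∀ _ : Unit, X.ncard ≤ k + 1 := fun _ => (Set.ncard_triple_le _ _ _).trans (by omega)
  have hY : ∀ _ : Unit, Y.ncard ≤ k + 1 := fun _ => (Set.ncard_triple_le _ _ _).trans (by omega)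
  refine twLE_of_bagTree (AXY.join B (.inr ()) i2 hAXYB) ?_ ?_
    (ncard_bag_join_le (ncard_bag_join_le (ncard_bag_join_le
      (ncard_bag_ofTreeDecomp_le T1 _ hT1) hX) hY) (ncard_bag_ofTreeDecomp_le T2 _ hT2))
  · rintro (x | y)
    · exact (hasBag_ofTreeDecomp_vertex T1 _ x).join_left.join_left.join_left
    · exact (hasBag_ofTreeDecomp_vertex T2 _ y).join_right
  · rintro (⟨e, -⟩ | ⟨e, -⟩ | _ | _)
    · exact (hasBag_ofTreeDecomp_ends T1 _ e).join_left.join_left.join_left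
    · exact (hasBag_ofTreeDecomp_ends T2 _ e).join_right
    · refine (hasBag_single Y).join_right.join_left.mono fun w hw => ?_
      rcases Sym2.mem_iff.mp hw with rfl | rfl <;> simp [Y]
    · refine (hasBag_single X).join_right.join_left.join_left.mono fun w hw => ?_
      rcases Sym2.mem_iff.mp hw with rfl | rfl <;> simp [X]

lemma edgeIdent_exists_ends_inl :
    ∀ e ∈ ({e1}ᶜ : Set G1.E),
      ∃ e', (edgeIdent G1 G2 e1 e2 u1 v1 u2 v2).ends e' = (G1.ends e).map Sum.inl :=
  fun e he => ⟨.inl ⟨e, he⟩, rfl⟩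

lemma edgeIdent_exists_ends_inr :
    ∀ e ∈ ({e2}ᶜ : Set G2.E),
      ∃ e', (edgeIdent G1 G2 e1 e2 u1 v1 u2 v2).ends e' = (G2.ends e).map Sum.inr :=
  fun e he => ⟨.inr (.inl ⟨e, he⟩), rfl⟩

/-- The cycle `u₁ ⋯ v₁ v₂ ⋯ u₂ u₁` through the new edges. -/
lemma two_le_edgeIdent_treewidth (h1 : G1.ends e1 = s(u1, v1)) (h2ec1 : G1.TwoEdgeConnected)
    (h2ec2 : G2.TwoEdgeConnected) : 2 ≤ (edgeIdent G1 G2 e1 e2 u1 v1 u2 v2).treewidth := by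
  have hv1u1 : (Sum.inl v1 : G1.V ⊕ G2.V) ≠ .inl u1 :=
    Sum.inl_injective.ne (ne_of_ends_eq h1).symm
  refine two_le_treewidth_of_reachAvoid (a := .inl u1) (b := .inr u2) (c := .inl v1)
    ⟨.inr (.inr true), trivial, rfl⟩ hv1u1 Sum.inl_ne_inr ?_ ?_
  · exact (h2ec1.reachOn_compl e1 v1 u1).map (fun _ => Sum.inl_ne_inr)
      (edgeIdent_exists_ends_inl G1 G2)
  · exact .head ⟨hv1u1, Sum.inr_ne_inl, .inr (.inr false), trivial, rfl⟩
      ((h2ec2.reachOn_compl e2 v2 u2).map (fun _ => Sum.inr_ne_inl)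
        (edgeIdent_exists_ends_inr G1 G2))

lemma treewidth_le_edgeIdent_left (h1 : G1.ends e1 = s(u1, v1)) (h2ec2 : G2.TwoEdgeConnected) :
    G1.treewidth ≤ (edgeIdent G1 G2 e1 e2 u1 v1 u2 v2).treewidth := by
  have : Nonempty G2.V := ⟨u2⟩
  refine treewidth_le_of_contract_onto Sum.inl Sum.inl_injective
    ((connectedSet_range (h2ec2.reachOn_compl e2) (edgeIdent_exists_ends_inr G1 G2)).insert_of_adj
      (Set.mem_range_self u2) ⟨.inr (.inr true), trivial, rfl⟩)
    h1 (fun _ => Sum.inl_mem_insert_range_inr) ?_ (edgeIdent_exists_ends_inl G1 G2)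
    ⟨.inr v2, .inr (Set.mem_range_self v2), .inr (.inr false), trivial, Sym2.eq_swap⟩
  rintro (x | y) hw
  exacts [Set.mem_range_self x, absurd (Or.inr (Set.mem_range_self y)) hw]

lemma treewidth_le_edgeIdent_right (h2 : G2.ends e2 = s(u2, v2)) (h2ec1 : G1.TwoEdgeConnected) :
    G2.treewidth ≤ (edgeIdent G1 G2 e1 e2 u1 v1 u2 v2).treewidth := by
  have : Nonempty G1.V := ⟨u1⟩
  refine treewidth_le_of_contract_onto Sum.inr Sum.inr_injective
    ((connectedSet_range (h2ec1.reachOn_compl e1) (edgeIdent_exists_ends_inl G1 G2)).insert_of_adj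
      (Set.mem_range_self u1) ⟨.inr (.inr true), trivial, Sym2.eq_swap⟩)
    h2 (fun _ => Sum.inr_mem_insert_range_inl) ?_ (edgeIdent_exists_ends_inr G1 G2)
    ⟨.inl v1, .inr (Set.mem_range_self v1), .inr (.inr false), trivial, rfl⟩
  rintro (x | y) hw
  exacts [absurd (Or.inr (Set.mem_range_self x)) hw, Set.mem_range_self y]

lemma edgeIdent_treewidth (h1 : G1.ends e1 = s(u1, v1)) (h2 : G2.ends e2 = s(u2, v2))
    (h2ec1 : G1.TwoEdgeConnected) (h2ec2 : G2.TwoEdgeConnected) :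
    (edgeIdent G1 G2 e1 e2 u1 v1 u2 v2).treewidth = max 2 (max G1.treewidth G2.treewidth) := by
  refine le_antisymm ?_ (max_le (two_le_edgeIdent_treewidth G1 G2 h1 h2ec1 h2ec2)
    (max_le (treewidth_le_edgeIdent_left G1 G2 h1 h2ec2)
      (treewidth_le_edgeIdent_right G1 G2 h2 h2ec1)))
  exact treewidth_le_iff.mpr <| edgeIdent_twLE G1 G2 h1 h2 (le_max_left _ _)
    (G1.twLE_treewidth.mono (by omega)) (G2.twLE_treewidth.mono (by omega))

end edgeIdent

section vertexEdgeIdent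

variable (G1 G2 : MGraph) {e1 : G1.E} {e2 : G2.E} {u1 v1 : G1.V} {u2 v2 : G2.V}
  (h2 : G2.ends e2 = s(u2, v2))

lemma vertexEdgeIdent_ends_new (t : Unit) :
    (vertexEdgeIdent G1 G2 e1 e2 u1 v1 u2 v2 h2).ends (.inr (.inr t)) =
      s(.inl u1, glueMap v1 v2 u2) := by
  rw [glueMap_of_ne v1 v2 (ne_of_ends_eq h2)]
  rfl

lemma vertexEdgeIdent_adjOn_new :
    (vertexEdgeIdent G1 G2 e1 e2 u1 v1 u2 v2 h2).AdjOn Set.univ (.inl u1) (glueMap v1 v2 u2) :=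
  ⟨.inr (.inr ()), trivial, vertexEdgeIdent_ends_new G1 G2 h2 ()⟩

lemma vertexEdgeIdent_exists_ends_inl :
    ∀ e ∈ ({e1}ᶜ : Set G1.E),
      ∃ e', (vertexEdgeIdent G1 G2 e1 e2 u1 v1 u2 v2 h2).ends e' = (G1.ends e).map Sum.inl :=
  fun e he => ⟨.inl ⟨e, he⟩, rfl⟩

lemma vertexEdgeIdent_exists_ends_glueMap :
    ∀ e ∈ ({e2}ᶜ : Set G2.E), ∃ e',
      (vertexEdgeIdent G1 G2 e1 e2 u1 v1 u2 v2 h2).ends e' = (G2.ends e).map (glueMap v1 v2) :=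
  fun e he => ⟨.inr (.inl ⟨e, he⟩), rfl⟩

/-- The decomposition `T₁ — {u₁, v₁, u₂} — T₂`. -/
lemma vertexEdgeIdent_twLE (h1 : G1.ends e1 = s(u1, v1)) {k : ℕ} (hk : 2 ≤ k) (hG1 : G1.twLE k)
    (hG2 : G2.twLE k) :
    (vertexEdgeIdent G1 G2 e1 e2 u1 v1 u2 v2 h2).twLE k := by
  obtain ⟨T1, hT1⟩ := hG1
  obtain ⟨T2, hT2⟩ := hG2
  obtain ⟨i1, hu1, hv1⟩ := T1.exists_mem_bag_of_ends h1
  obtain ⟨i2, hu2, hv2⟩ := T2.exists_mem_bag_of_ends h2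
  have hne1 := ne_of_ends_eq h1
  have hne2 := ne_of_ends_eq h2
  let A := ofTreeDecomp T1 (Sum.inl_injective (β := {y : G2.V // y ≠ v2}))
  let B := ofTreeDecomp T2 (glueMap_injective v1 v2)
  let X : Set (G1.V ⊕ {y : G2.V // y ≠ v2}) := {.inl u1, .inl v1, glueMap v1 v2 u2}
  have hAX : A.support ∩ (single X).support ⊆ A.bag i1 ∩ X := by
    rintro v ⟨hv, hvX⟩
    simp only [A, support_ofTreeDecomp, support_single] at hv hvX
    obtain ⟨x, rfl⟩ := hv
    rcases hvX with h | h | h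
    · simp_all [A, X]
    · simp_all [A, X]
    · exact absurd ((glueMap_eq_inl_iff v1 v2).mp h.symm).1 hne2
  let AX := A.join (single X) i1 () hAX
  have hAXB : AX.support ∩ B.support ⊆ AX.bag (.inr ()) ∩ B.bag i2 := by
    rintro v ⟨hv, hvB⟩
    simp only [AX, A, B, support_join, support_ofTreeDecomp, support_single] at hv hvB
    obtain ⟨y, rfl⟩ := hvB
    have hy : y = u2 ∨ y = v2 := by
      rcases hv with ⟨x, hx⟩ | h | h | h
      · exact Or.inr ((glueMap_eq_inl_iff v1 v2).mp hx.symm).1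
      · exact absurd ((glueMap_eq_inl_iff v1 v2).mp h).2 hne1
      · exact Or.inr ((glueMap_eq_inl_iff v1 v2).mp h).1
      · exact Or.inl (glueMap_injective v1 v2 h)
    refine ⟨?_, y, by rcases hy with rfl | rfl <;> assumption, rfl⟩
    rcases hy with rfl | rfl
    exacts [Or.inr (Or.inr rfl), Or.inr (Or.inl (glueMap_self v1 y))]
  have hX : ∀ _ : Unit, X.ncard ≤ k + 1 := fun _ => (Set.ncard_triple_le _ _ _).trans (by omega)
  refine twLE_of_bagTree (AX.join B (.inr ()) i2 hAXB) ?_ ?_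
    (ncard_bag_join_le (ncard_bag_join_le (ncard_bag_ofTreeDecomp_le T1 _ hT1) hX)
      (ncard_bag_ofTreeDecomp_le T2 _ hT2))
  · rintro (x | ⟨y, hy⟩)
    · exact (hasBag_ofTreeDecomp_vertex T1 _ x).join_left.join_left
    · rw [← glueMap_of_ne v1 v2 hy]
      exact (hasBag_ofTreeDecomp_vertex T2 _ y).join_right
  · rintro (⟨e, -⟩ | ⟨e, -⟩ | t)
    · exact (hasBag_ofTreeDecomp_ends T1 _ e).join_left.join_left
    · exact (hasBag_ofTreeDecomp_ends T2 _ e).join_right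
    · refine (hasBag_single X).join_right.join_left.mono fun w hw => ?_
      rcases Sym2.mem_iff.mp (vertexEdgeIdent_ends_new G1 G2 h2 t ▸ hw) with rfl | rfl
      exacts [Or.inl rfl, Or.inr (Or.inr rfl)]

/-- The cycle `u₁ ⋯ v₁ = v₂ ⋯ u₂ u₁` through the new edge. -/
lemma two_le_vertexEdgeIdent_treewidth (h1 : G1.ends e1 = s(u1, v1))
    (h2ec1 : G1.TwoEdgeConnected) (h2ec2 : G2.TwoEdgeConnected) :
    2 ≤ (vertexEdgeIdent G1 G2 e1 e2 u1 v1 u2 v2 h2).treewidth := by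
  have hne1 := ne_of_ends_eq h1
  have hne2 := ne_of_ends_eq h2
  have hv1u2 : Sum.inl v1 ≠ glueMap v1 v2 u2 := fun h =>
    hne2 ((glueMap_eq_inl_iff v1 v2).mp h.symm).1
  refine two_le_treewidth_of_reachAvoid (vertexEdgeIdent_adjOn_new G1 G2 h2)
    (Sum.inl_injective.ne hne1.symm) hv1u2 ?_ ?_
  · exact (h2ec1.reachOn_compl e1 v1 u1).map (G := vertexEdgeIdent G1 G2 e1 e2 u1 v1 u2 v2 h2)
      (S := {glueMap v1 v2 u2}ᶜ) (fun x h => hne2 ((glueMap_eq_inl_iff v1 v2).mp (Eq.symm h)).1)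
      (vertexEdgeIdent_exists_ends_inl G1 G2 h2)
  · have := (h2ec2.reachOn_compl e2 v2 u2).map (G := vertexEdgeIdent G1 G2 e1 e2 u1 v1 u2 v2 h2)
      (S := {.inl u1}ᶜ)
      (fun y h => hne1 ((glueMap_eq_inl_iff v1 v2).mp h).2)
      (vertexEdgeIdent_exists_ends_glueMap G1 G2 h2)
    rwa [glueMap_self] at this

lemma treewidth_le_vertexEdgeIdent_left (h1 : G1.ends e1 = s(u1, v1))
    (h2ec2 : G2.TwoEdgeConnected) :
    G1.treewidth ≤ (vertexEdgeIdent G1 G2 e1 e2 u1 v1 u2 v2 h2).treewidth := by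
  have : Nonempty G2.V := ⟨u2⟩
  refine treewidth_le_of_contract_onto (H := G1) Sum.inl Sum.inl_injective
    (connectedSet_range (h2ec2.reachOn_compl e2) (vertexEdgeIdent_exists_ends_glueMap G1 G2 h2))
    (h1.trans Sym2.eq_swap) (fun x => ⟨fun ⟨y, hy⟩ => ((glueMap_eq_inl_iff v1 v2).mp hy).2,
      fun h => ⟨v2, by rw [h, glueMap_self]⟩⟩) ?_ (vertexEdgeIdent_exists_ends_inl G1 G2 h2)
    ⟨glueMap v1 v2 u2, Set.mem_range_self u2, (vertexEdgeIdent_adjOn_new G1 G2 h2).symm⟩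
  rintro (x | ⟨y, hy⟩) hw
  exacts [Set.mem_range_self x, absurd ⟨y, glueMap_of_ne v1 v2 hy⟩ hw]

lemma treewidth_le_vertexEdgeIdent_right (h2ec1 : G1.TwoEdgeConnected) :
    G2.treewidth ≤ (vertexEdgeIdent G1 G2 e1 e2 u1 v1 u2 v2 h2).treewidth := by
  have : Nonempty G1.V := ⟨u1⟩
  refine treewidth_le_of_contract_onto (glueMap v1 v2) (glueMap_injective v1 v2)
    (connectedSet_range (h2ec1.reachOn_compl e1) (vertexEdgeIdent_exists_ends_inl G1 G2 h2))
    (h2.trans Sym2.eq_swap)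
    (fun y => ⟨fun ⟨x, hx⟩ => ((glueMap_eq_inl_iff v1 v2).mp hx.symm).1,
      fun h => ⟨v1, by rw [h, glueMap_self]⟩⟩) ?_ (vertexEdgeIdent_exists_ends_glueMap G1 G2 h2)
    ⟨.inl u1, Set.mem_range_self u1, vertexEdgeIdent_adjOn_new G1 G2 h2⟩
  rintro (x | ⟨y, hy⟩) hw
  exacts [absurd (Set.mem_range_self x) hw, ⟨y, glueMap_of_ne v1 v2 hy⟩]

lemma vertexEdgeIdent_treewidth (h1 : G1.ends e1 = s(u1, v1)) (h2ec1 : G1.TwoEdgeConnected)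
    (h2ec2 : G2.TwoEdgeConnected) :
    (vertexEdgeIdent G1 G2 e1 e2 u1 v1 u2 v2 h2).treewidth =
      max 2 (max G1.treewidth G2.treewidth) := by
  refine le_antisymm ?_ (max_le (two_le_vertexEdgeIdent_treewidth G1 G2 h2 h1 h2ec1 h2ec2)
    (max_le (treewidth_le_vertexEdgeIdent_left G1 G2 h2 h1 h2ec2)
      (treewidth_le_vertexEdgeIdent_right G1 G2 h2 h2ec1)))
  exact treewidth_le_iff.mpr <| vertexEdgeIdent_twLE G1 G2 h2 h1 (le_max_left _ _)
    (G1.twLE_treewidth.mono (by omega)) (G2.twLE_treewidth.mono (by omega))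

end vertexEdgeIdent

end MGraph

/-- treewidth under the three identification operations. -/
theorem treewidth_identifications (G1 G2 : MGraph)
    (h2ec1 : G1.TwoEdgeConnected) (h2ec2 : G2.TwoEdgeConnected) :
    (∀ (u1 : G1.V) (u2 : G2.V),
      (MGraph.vertexIdent G1 G2 u1 u2).treewidth = max G1.treewidth G2.treewidth) ∧
    (∀ (e1 : G1.E) (e2 : G2.E) (u1 v1 : G1.V) (u2 v2 : G2.V),
      G1.ends e1 = s(u1, v1) → G2.ends e2 = s(u2, v2) →
      (MGraph.edgeIdent G1 G2 e1 e2 u1 v1 u2 v2).treewidth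
        = max 2 (max G1.treewidth G2.treewidth)) ∧
    (∀ (e1 : G1.E) (e2 : G2.E) (u1 v1 : G1.V) (u2 v2 : G2.V)
      (_h1 : G1.ends e1 = s(u1, v1)) (h2 : G2.ends e2 = s(u2, v2)),
      (MGraph.vertexEdgeIdent G1 G2 e1 e2 u1 v1 u2 v2 h2).treewidth
        = max 2 (max G1.treewidth G2.treewidth)) :=
  ⟨MGraph.vertexIdent_treewidth G1 G2,
    fun _ _ _ _ _ _ h1 h2 => MGraph.edgeIdent_treewidth G1 G2 h1 h2 h2ec1 h2ec2,
    fun _ _ _ _ _ _ h1 h2 => MGraph.vertexEdgeIdent_treewidth G1 G2 h2 h1 h2ec1 h2ec2⟩
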